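/- Let (Ω, μ) be a probability space, H > 0, α > 1, λ > 0, and let X be a map from the positive reals to L²(μ) which is wide-sense discrete scale invariant (DSI) with index H and scale λ, i.e. for all t, u > 0: ∫ X(λt) dμ = λ^H ∫ X(t) dμ and ∫ X(λt)·X(λu) dμ = λ^{2H} ∫ X(t)·X(u) dμ. Define the inverse quasi Lamperti transform Y(t) := α^{-tH} · X(α^t) for t ∈ ℝ. Then Y is wide-sense periodically correlated (PC) with period T = log_α λ, i.e. for all t, u ∈ ℝ: ∫ Y(t+T) dμ = ∫ Y(t) dμ and ∫ Y(t+T)·Y(u+T) dμ = ∫ Y(t)·Y(u) dμ. -/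
import Mathlib


open MeasureTheory Real

private lemma int_smul {Ω : Type*} [MeasurableSpace Ω] (μ : Measure Ω)
    (c : ℝ) (f : Lp ℝ 2 μ) : ∫ ω, (c • f) ω ∂μ = c * ∫ ω, f ω ∂μ := by
  rw [integral_congr_ae (Lp.coeFn_smul c f)]
  simp [integral_const_mul]

private lemma int_smul_mul {Ω : Type*} [MeasurableSpace Ω] (μ : Measure Ω)
    (c d : ℝ) (f g : Lp ℝ 2 μ) :
    ∫ ω, (c • f) ω * (d • g) ω ∂μ = c * d * ∫ ω, f ω * g ω ∂μ := by
  rw [← integral_const_mul]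
  refine integral_congr_ae ?_
  filter_upwards [Lp.coeFn_smul c f, Lp.coeFn_smul d g] with ω h1 h2
  simp [h1, h2]; ring

/-- One direction of Proposition 2.4: the inverse quasi Lamperti transform of a
wide-sense DSI process (index `H`, scale `lam`) is wide-sense PC with period
`T = log_α lam`. -/
theorem inverse_quasi_lamperti_of_DSI_is_PC
    {Ω : Type*} [MeasurableSpace Ω] (μ : Measure Ω) [IsProbabilityMeasure μ]
    (H α lam : ℝ) (hH : 0 < H) (hα : 1 < α) (hlam : 0 < lam)
    (X : ℝ → Lp ℝ 2 μ)
    (hXmean : ∀ t : ℝ, 0 < t →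
      ∫ ω, X (lam * t) ω ∂μ = lam ^ H * ∫ ω, X t ω ∂μ)
    (hXcov : ∀ t u : ℝ, 0 < t → 0 < u →
      ∫ ω, X (lam * t) ω * X (lam * u) ω ∂μ
        = lam ^ (2 * H) * ∫ ω, X t ω * X u ω ∂μ)
    (Y : ℝ → Lp ℝ 2 μ)
    (hY : ∀ t : ℝ, Y t = α ^ (-(t * H)) • X (α ^ t))
    (T : ℝ) (hT : T = Real.logb α lam) :
    (∀ t : ℝ, ∫ ω, Y (t + T) ω ∂μ = ∫ ω, Y t ω ∂μ) ∧
    (∀ t u : ℝ, ∫ ω, Y (t + T) ω * Y (u + T) ω ∂μ = ∫ ω, Y t ω * Y u ω ∂μ) := by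
  have hα0 : (0:ℝ) < α := lt_trans one_pos hα
  have hαT : α ^ T = lam := by
    rw [hT, Real.rpow_logb hα0 (ne_of_gt hα) hlam]
  have hkey : ∀ t : ℝ, α ^ (t + T) = lam * α ^ t := by
    intro t
    rw [Real.rpow_add hα0, hαT]; ring
  have hpow : ∀ t : ℝ, (0:ℝ) < α ^ t := fun t => Real.rpow_pos_of_pos hα0 t
  have hlamH : lam ^ H = α ^ (T * H) := by
    rw [← hαT]
    exact (Real.rpow_mul (le_of_lt hα0) T H).symm
  constructor
  · intro t
    rw [hY (t + T), hY t, int_smul, int_smul, hkey t, hXmean _ (hpow t), hlamH,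
      ← mul_assoc, ← Real.rpow_add hα0]
    ring_nf
  · intro t u
    rw [hY (t + T), hY (u + T), hY t, hY u, int_smul_mul, int_smul_mul,
      hkey t, hkey u, hXcov _ _ (hpow t) (hpow u)]
    have h2 : lam ^ (2 * H) = α ^ (2 * (T * H)) := by
      rw [← hαT, ← Real.rpow_mul (le_of_lt hα0)]
      ring_nf
    rw [h2, ← mul_assoc, ← Real.rpow_add hα0, ← Real.rpow_add hα0,
      ← Real.rpow_add hα0]
    ring_nf
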